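/- A commutative C*-algebra C₀(X), for X a locally compact Hausdorff space, is a Z*-algebra (every positive element is a zero divisor) if and only if X is not approximately σ-compact (X does not admit a sequence of compact subsets with dense union). -/

import Mathlib

/-!
Both conditions are governed by supports. In `C₀(X)` an element `g` is a zero divisor exactly
when its support `{g ≠ 0}` is not dense: a nonzero `h` with `g * h = 0` has a nonempty open
support disjoint from that of `g`, and conversely Urysohn's lemma produces such an `h` near any
point outside the closure of the support of `g`. The support of any `g ∈ C₀(X)` is σ-compact,
being the union of the compact sets `{1 / (n + 1) ≤ ‖g‖}`; conversely the compact sets `Kₙ` are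
contained in the support of the nonnegative function `∑ 2⁻ⁿ fₙ`, where `fₙ` is a Urysohn
function equal to `1` on `Kₙ`. Hence a nonnegative element with dense support exists iff `X` is
approximately σ-compact.
-/

open scoped ZeroAtInfty ComplexOrder

open Set Function Filter Topology

namespace ZeroAtInftyContinuousMap

variable {X : Type*} [TopologicalSpace X]

section Normed

variable {E : Type*} [NormedAddCommGroup E]

theorem isCompact_le_norm (f : C₀(X, E)) {ε : ℝ} (hε : 0 < ε) : IsCompact {x | ε ≤ ‖f x‖} := by
  have hsmall : ∀ᶠ x in cocompact X, ‖f x‖ < ε := by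
    simpa only [Metric.mem_ball, dist_zero_right] using
      (zero_at_infty f).eventually (Metric.ball_mem_nhds 0 hε)
  obtain ⟨C, hC, hsub⟩ := mem_cocompact'.1 hsmall
  exact hC.of_isClosed_subset (isClosed_le continuous_const f.continuous.norm)
    (by simpa only [compl_ofPred, not_lt] using hsub)

theorem isSigmaCompact_support (f : C₀(X, E)) : IsSigmaCompact (support f) := by
  refine ⟨fun n => {x | ((n : ℝ) + 1)⁻¹ ≤ ‖f x‖}, fun n => f.isCompact_le_norm (by positivity), ?_⟩
  ext x
  simp only [mem_iUnion, mem_ofPred_eq, mem_support, ← norm_pos_iff]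
  constructor
  · rintro ⟨n, hn⟩
    exact (by positivity : (0 : ℝ) < ((n : ℝ) + 1)⁻¹).trans_le hn
  · intro hx
    obtain ⟨n, hn⟩ := exists_nat_one_div_lt hx
    exact ⟨n, by simpa only [one_div] using hn.le⟩

theorem hasSum_apply {ι : Type*} {F : ι → C₀(X, E)} {g : C₀(X, E)} (hF : HasSum F g) (x : X) :
    HasSum (fun i => F i x) (g x) :=
  hF.map (⟨⟨fun f => f x, rfl⟩, fun _ _ => rfl⟩ : C₀(X, E) →+ E)
    ((continuous_eval_const x).comp isometry_toBCF.continuous)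

end Normed

section Urysohn

variable [RegularSpace X] [LocallyCompactSpace X]

theorem exists_one_zero_of_isCompact {K t : Set X} (hK : IsCompact K) (ht : IsClosed t)
    (hd : Disjoint K t) :
    ∃ f : C₀(X, ℝ), EqOn f 1 K ∧ EqOn f 0 t ∧ ∀ x, f x ∈ Icc (0 : ℝ) 1 := by
  obtain ⟨f, hfK, hft, hfc, hf01⟩ := exists_continuous_one_zero_of_isCompact hK ht hd
  exact ⟨⟨f, hfc.is_zero_at_infty⟩, hfK, hft, hf01⟩

theorem _root_.IsSigmaCompact.exists_nonneg_subset_support {s : Set X} (hs : IsSigmaCompact s) :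
    ∃ g : C₀(X, ℝ), (∀ x, 0 ≤ g x) ∧ s ⊆ support g := by
  obtain ⟨K, hK, rfl⟩ := hs
  choose F hF1 _ hF01 using fun n =>
    exists_one_zero_of_isCompact (hK n) isClosed_empty (disjoint_empty _)
  have hnorm : ∀ n, ‖(1 / 2 : ℝ) ^ n • F n‖ ≤ (1 / 2) ^ n := fun n => by
    have hFn : ‖F n‖ ≤ 1 := by
      rw [← norm_toBCF_eq_norm]
      refine (BoundedContinuousFunction.norm_le zero_le_one).2 fun x => ?_
      rw [toBCF_apply, Real.norm_eq_abs, abs_of_nonneg (hF01 n x).1]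
      exact (hF01 n x).2
    rw [norm_smul, norm_pow, norm_div, norm_one, Real.norm_two]
    exact mul_le_of_le_one_right (by positivity) hFn
  obtain ⟨g, hg⟩ := Summable.of_norm_bounded summable_geometric_two hnorm
  have hterm_nonneg : ∀ x n, 0 ≤ ((1 / 2 : ℝ) ^ n • F n) x := fun x n =>
    mul_nonneg (by positivity) (hF01 n x).1
  refine ⟨g, fun x => (hasSum_apply hg x).nonneg (hterm_nonneg x), ?_⟩
  intro x hx
  obtain ⟨m, hxm⟩ := mem_iUnion.1 hx
  have hm : ((1 / 2 : ℝ) ^ m • F m) x ≤ g x :=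
    le_hasSum (hasSum_apply hg x) m fun n _ => hterm_nonneg x n
  rw [smul_apply, hF1 m hxm, Pi.one_apply, smul_eq_mul, mul_one] at hm
  exact (lt_of_lt_of_le (by positivity) hm).ne'

end Urysohn

section RCLike

variable {𝕜 : Type*} [RCLike 𝕜]

def ofReal (f : C₀(X, ℝ)) : C₀(X, 𝕜) where
  toFun x := f x
  continuous_toFun := RCLike.continuous_ofReal.comp f.continuous
  zero_at_infty' := by
    simpa [Function.comp_def] using
      ((RCLike.continuous_ofReal (K := 𝕜)).tendsto 0).comp (zero_at_infty f)

@[simp]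
theorem ofReal_apply (f : C₀(X, ℝ)) (x : X) : (ofReal f : C₀(X, 𝕜)) x = f x := rfl

@[simp]
theorem support_ofReal (f : C₀(X, ℝ)) : support (ofReal f : C₀(X, 𝕜)) = support f := by
  ext x
  simp

theorem exists_ne_zero_mul_eq_zero_iff [RegularSpace X] [LocallyCompactSpace X]
    (g : C₀(X, 𝕜)) : (∃ h : C₀(X, 𝕜), h ≠ 0 ∧ g * h = 0) ↔ ¬ Dense (support g) := by
  constructor
  · rintro ⟨h, hh0, hgh⟩ hdense
    have hvanish : EqOn h 0 (support g) := fun x hx =>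
      (mul_eq_zero.1 (congr($hgh x))).resolve_left hx
    exact hh0 (ext fun x => congrFun (h.continuous.ext_on hdense continuous_zero hvanish) x)
  · intro hnd
    obtain ⟨x₀, hx₀⟩ : ∃ x, x ∉ closure (support g) := by simpa [Dense] using hnd
    obtain ⟨f, hf1, hf0, -⟩ := exists_one_zero_of_isCompact isCompact_singleton isClosed_closure
      (disjoint_singleton_left.2 hx₀)
    refine ⟨ofReal f, fun h => ?_, ext fun x => ?_⟩
    · simpa [hf1 rfl] using congr($h x₀)
    · by_cases hx : g x = 0
      · simp [hx]
      · simp [hf0 (subset_closure hx)]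

end RCLike

end ZeroAtInftyContinuousMap

/-- `C₀(X)` is a Z*-algebra (every positive element is a zero divisor) iff `X` is not
approximately σ-compact. -/
theorem stmt_5 {X : Type*} [TopologicalSpace X] [LocallyCompactSpace X] [T2Space X] :
    (∀ g : C₀(X, ℂ), (∀ x, 0 ≤ g x) → ∃ h : C₀(X, ℂ), h ≠ 0 ∧ g * h = 0) ↔
      ¬ ∃ K : ℕ → Set X, (∀ n, IsCompact (K n)) ∧ Dense (⋃ n, K n) := by
  simp only [ZeroAtInftyContinuousMap.exists_ne_zero_mul_eq_zero_iff]
  constructor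
  · rintro hZ ⟨K, hK, hdense⟩
    obtain ⟨g, hg0, hsupp⟩ := IsSigmaCompact.exists_nonneg_subset_support ⟨K, hK, rfl⟩
    exact hZ (ZeroAtInftyContinuousMap.ofReal g) (fun x => by simpa using hg0 x)
      (by simpa using hdense.mono hsupp)
  · rintro hAσC g - hdense
    obtain ⟨K, hK, hKg⟩ := g.isSigmaCompact_support
    exact hAσC ⟨K, hK, hKg ▸ hdense⟩
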